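/- With b and β as above and 0 < r < s, define ρ_{r,s}(τ) = ∫_{−∞}^τ (τ − t) e^t ( β(t − log r) + β(t − log s) ) dt. Then ρ_{r,s} ≥ 0, ρ_{r,s}″(τ) = e^τ(β(τ − log r) + β(τ − log s)), and with C₀ = ∫_ℝ e^t β(t) dt one has ρ_{r,s}′(τ) ≤ C₀ ( r·1_{τ > log r} + s·1_{τ > log s} ) and 0 ≤ ρ_{r,s}(τ) ≤ C₀ ( r (τ − log r)₊ + s (τ − log s)₊ ) for all τ. -/

import Mathlib

open MeasureTheory

/-- `β = 2|b| + |b′|`. -/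
noncomputable def betaFn (b : ℝ → ℝ) : ℝ → ℝ := fun t => 2 * |b t| + |deriv b t|

/-- `ρ_{r,s}(τ) = ∫_{-∞}^τ (τ − t) e^t (β(t − log r) + β(t − log s)) dt`. -/
noncomputable def rhoRS (b : ℝ → ℝ) (r s τ : ℝ) : ℝ :=
  ∫ t in Set.Iic τ,
    (τ - t) * Real.exp t * (betaFn b (t - Real.log r) + betaFn b (t - Real.log s))

/-- `C₀ = ∫ e^t β(t) dt`. -/
noncomputable def C0 (b : ℝ → ℝ) : ℝ := ∫ t, Real.exp t * betaFn b t

open Set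

lemma beta_nonneg (b : ℝ → ℝ) (t : ℝ) : 0 ≤ betaFn b t := by
  unfold betaFn; positivity

lemma beta_cont {b : ℝ → ℝ} (hb : ContDiff ℝ (⊤ : ℕ∞) b) : Continuous (betaFn b) :=
  (continuous_const.mul hb.continuous.abs).add (hb.continuous_deriv (by simp)).abs

lemma beta_eq_zero {b : ℝ → ℝ}
    (hsupp : Function.support b ⊆ Set.Ioo 0 (1/2)) (hnn : ∀ x, 0 ≤ b x)
    {x : ℝ} (hx : x ≤ 0 ∨ 1/2 ≤ x) : betaFn b x = 0 := by
  have hbx : b x = 0 := by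
    by_contra h
    have h2 := hsupp h
    rcases hx with h1 | h1
    · linarith [h2.1]
    · linarith [h2.2]
  have hmin : IsLocalMin b x :=
    Filter.Eventually.of_forall (fun y => hbx ▸ hnn y)
  have hdx : deriv b x = 0 := hmin.deriv_eq_zero
  simp [betaFn, hbx, hdx]

lemma beta_cs {b : ℝ → ℝ}
    (hsupp : Function.support b ⊆ Set.Ioo 0 (1/2)) (hnn : ∀ x, 0 ≤ b x) :
    HasCompactSupport (betaFn b) := by
  apply HasCompactSupport.intro (isCompact_Icc (a := (0:ℝ)) (b := 1/2))
  intro x hx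
  simp only [mem_Icc, not_and_or, not_le] at hx
  exact beta_eq_zero hsupp hnn (by rcases hx with h | h; exacts [Or.inl h.le, Or.inr h.le])

lemma integral_Iic_comp_sub_right (g : ℝ → ℝ) (c τ : ℝ) :
    ∫ t in Set.Iic τ, g (t - c) = ∫ u in Set.Iic (τ - c), g u := by
  rw [← integral_indicator measurableSet_Iic, ← integral_indicator measurableSet_Iic,
    ← integral_sub_right_eq_self ((Set.Iic (τ - c)).indicator g) c]
  congr 1; funext t
  by_cases h : t ≤ τ <;>
    simp [Set.indicator_apply, h, sub_le_sub_iff_right]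

/-- Pointwise estimates for `ρ_{r,s}`. -/
theorem stmt_12 (b : ℝ → ℝ)
    (hb_smooth : ContDiff ℝ (⊤ : ℕ∞) b)
    (hb_supp : Function.support b ⊆ Set.Ioo 0 (1/2))
    (hb_nonneg : ∀ x, 0 ≤ b x)
    (hb_int : (∫ x, b x) = 1)
    (r s : ℝ) (hr : 0 < r) (hrs : r < s) :
    (∀ τ, 0 ≤ rhoRS b r s τ) ∧
    (∀ τ, deriv (deriv (rhoRS b r s)) τ =
      Real.exp τ * (betaFn b (τ - Real.log r) + betaFn b (τ - Real.log s))) ∧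
    (∀ τ, deriv (rhoRS b r s) τ ≤
      C0 b * ((if Real.log r < τ then r else 0) + (if Real.log s < τ then s else 0))) ∧
    (∀ τ, rhoRS b r s τ ≤
      C0 b * (r * max (τ - Real.log r) 0 + s * max (τ - Real.log s) 0)) := by
  have hs : 0 < s := hr.trans hrs
  set g : ℝ → ℝ := fun t => Real.exp t * betaFn b t with hg_def
  set f : ℝ → ℝ := fun t =>
    Real.exp t * (betaFn b (t - Real.log r) + betaFn b (t - Real.log s)) with hf_def
  have hgcont : Continuous g := Real.continuous_exp.mul (beta_cont hb_smooth)
  have hgcs : HasCompactSupport g :=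
    (beta_cs hb_supp hb_nonneg).mul_left
  have hgint : Integrable g := hgcont.integrable_of_hasCompactSupport hgcs
  have hgnn : ∀ t, 0 ≤ g t := fun t =>
    mul_nonneg (Real.exp_pos t).le (beta_nonneg b t)
  have hg0 : ∀ t ≤ 0, g t = 0 := fun t ht => by
    simp [hg_def, beta_eq_zero hb_supp hb_nonneg (Or.inl ht)]
  have hC0nn : 0 ≤ C0 b := integral_nonneg hgnn
  -- facts about shifted g
  have hshift_cont : ∀ c : ℝ, Continuous (fun t => g (t - c)) := fun c =>
    hgcont.comp (continuous_id.sub continuous_const)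
  have hshift_cs : ∀ c : ℝ, HasCompactSupport (fun t => g (t - c)) := fun c =>
    hgcs.comp_homeomorph (Homeomorph.subRight c)
  have hshift_int : ∀ c : ℝ, Integrable (fun t => g (t - c)) := fun c =>
    (hshift_cont c).integrable_of_hasCompactSupport (hshift_cs c)
  -- f expressed via g
  have hexp_r : ∀ t : ℝ, Real.exp t = r * Real.exp (t - Real.log r) := by
    intro t
    rw [Real.exp_sub, Real.exp_log hr]
    field_simp
  have hexp_s : ∀ t : ℝ, Real.exp t = s * Real.exp (t - Real.log s) := by
    intro t
    rw [Real.exp_sub, Real.exp_log hs]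
    field_simp
  have hf_eq : ∀ t, f t = r * g (t - Real.log r) + s * g (t - Real.log s) := by
    intro t
    simp only [hf_def, hg_def]
    linear_combination betaFn b (t - Real.log r) * hexp_r t +
      betaFn b (t - Real.log s) * hexp_s t
  have hfcont : Continuous f := Real.continuous_exp.mul
    (((beta_cont hb_smooth).comp (continuous_id.sub continuous_const)).add
      ((beta_cont hb_smooth).comp (continuous_id.sub continuous_const)))
  have hfint : Integrable f := by
    have : Integrable (fun t => r * g (t - Real.log r) + s * g (t - Real.log s)) :=
      ((hshift_int _).const_mul r).add ((hshift_int _).const_mul s)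
    exact this.congr (Filter.Eventually.of_forall fun t => (hf_eq t).symm)
  have hfnn : ∀ t, 0 ≤ f t := fun t =>
    mul_nonneg (Real.exp_pos t).le (add_nonneg (beta_nonneg _ _) (beta_nonneg _ _))
  have htfint : Integrable (fun t => t * f t) := by
    have hcs : HasCompactSupport f := by
      have h1 : HasCompactSupport (fun t => betaFn b (t - Real.log r)) :=
        (beta_cs hb_supp hb_nonneg).comp_homeomorph (Homeomorph.subRight _)
      have h2 : HasCompactSupport (fun t => betaFn b (t - Real.log s)) :=
        (beta_cs hb_supp hb_nonneg).comp_homeomorph (Homeomorph.subRight _)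
      exact (h1.add h2).mul_left
    exact (continuous_id.mul hfcont).integrable_of_hasCompactSupport hcs.mul_left
  set A : ℝ → ℝ := fun τ => ∫ t in Iic τ, f t with hA_def
  set B : ℝ → ℝ := fun τ => ∫ t in Iic τ, t * f t with hB_def
  have hrho_eq : rhoRS b r s = fun τ => τ * A τ - B τ := by
    funext τ
    unfold rhoRS
    have h1 : ∀ t ∈ Iic τ,
        (τ - t) * Real.exp t * (betaFn b (t - Real.log r) + betaFn b (t - Real.log s)) =
        τ * f t - t * f t := by
      intro t _
      simp only [hf_def]
      ring
    rw [setIntegral_congr_fun measurableSet_Iic h1,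
      integral_sub ((hfint.const_mul τ).integrableOn) (htfint.integrableOn),
      integral_const_mul]
  have hA' : ∀ τ, HasDerivAt A (f τ) τ := by
    intro τ
    have key : A = fun x => A 0 + ∫ t in (0:ℝ)..x, f t := by
      funext x
      have h := intervalIntegral.integral_Iic_sub_Iic (hfint.integrableOn (s := Iic 0))
        (hfint.integrableOn (s := Iic x))
      simp only [hA_def]
      linarith [h]
    rw [key]
    exact ((intervalIntegral.integral_hasDerivAt_right
      (hfint.intervalIntegrable)
      (hfcont.stronglyMeasurableAtFilter _ _)
      hfcont.continuousAt).const_add (A 0))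
  have hB' : ∀ τ, HasDerivAt B (τ * f τ) τ := by
    intro τ
    have key : B = fun x => B 0 + ∫ t in (0:ℝ)..x, t * f t := by
      funext x
      have h := intervalIntegral.integral_Iic_sub_Iic (htfint.integrableOn (s := Iic 0))
        (htfint.integrableOn (s := Iic x))
      simp only [hB_def]
      linarith [h]
    rw [key]
    exact ((intervalIntegral.integral_hasDerivAt_right
      (htfint.intervalIntegrable)
      ((continuous_id.mul hfcont).stronglyMeasurableAtFilter _ _)
      (continuous_id.mul hfcont).continuousAt).const_add (B 0))
  have hderiv : ∀ τ, HasDerivAt (rhoRS b r s) (A τ) τ := by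
    intro τ
    rw [hrho_eq]
    have h := ((hasDerivAt_id τ).mul (hA' τ)).sub (hB' τ)
    exact h.congr_deriv (by simp)
  have hderiv_rho : deriv (rhoRS b r s) = A := funext fun τ => (hderiv τ).deriv
  -- A via shifted integrals
  have hA_eq : ∀ τ, A τ = r * (∫ u in Iic (τ - Real.log r), g u)
      + s * (∫ u in Iic (τ - Real.log s), g u) := by
    intro τ
    simp only [hA_def]
    rw [setIntegral_congr_fun measurableSet_Iic (fun t _ => hf_eq t),
      integral_add (((hshift_int _).const_mul r).integrableOn)
        (((hshift_int _).const_mul s).integrableOn),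
      integral_const_mul, integral_const_mul,
      integral_Iic_comp_sub_right, integral_Iic_comp_sub_right]
  have hJ_le : ∀ w : ℝ, (∫ u in Iic w, g u) ≤ C0 b := fun w =>
    setIntegral_le_integral hgint (Filter.Eventually.of_forall hgnn)
  have hJ_nn : ∀ w : ℝ, 0 ≤ ∫ u in Iic w, g u := fun w =>
    setIntegral_nonneg measurableSet_Iic fun u _ => hgnn u
  have hJ_zero : ∀ w ≤ 0, (∫ u in Iic w, g u) = 0 := by
    intro w hw
    rw [setIntegral_congr_fun measurableSet_Iic
      (fun u (hu : u ∈ Iic w) => hg0 u (le_trans hu hw))]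
    simp
  refine ⟨?_, ?_, ?_, ?_⟩
  · -- nonnegativity
    intro τ
    unfold rhoRS
    apply setIntegral_nonneg measurableSet_Iic
    intro t ht
    have h1 : (0:ℝ) ≤ τ - t := sub_nonneg.2 ht
    exact mul_nonneg (mul_nonneg h1 (Real.exp_pos t).le)
      (add_nonneg (beta_nonneg _ _) (beta_nonneg _ _))
  · -- second derivative
    intro τ
    rw [hderiv_rho]
    exact (hA' τ).deriv
  · -- first derivative bound
    intro τ
    rw [hderiv_rho, hA_eq τ, mul_add]
    have h1 : r * (∫ u in Iic (τ - Real.log r), g u) ≤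
        C0 b * (if Real.log r < τ then r else 0) := by
      by_cases h : Real.log r < τ
      · simp only [h, if_pos]
        rw [mul_comm (C0 b) r]
        exact mul_le_mul_of_nonneg_left (hJ_le _) hr.le
      · simp only [h, if_neg, not_false_iff, mul_zero]
        rw [hJ_zero _ (by linarith [not_lt.1 h])]
        simp
    have h2 : s * (∫ u in Iic (τ - Real.log s), g u) ≤
        C0 b * (if Real.log s < τ then s else 0) := by
      by_cases h : Real.log s < τ
      · simp only [h, if_pos]
        rw [mul_comm (C0 b) s]
        exact mul_le_mul_of_nonneg_left (hJ_le _) hs.le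
      · simp only [h, if_neg, not_false_iff, mul_zero]
        rw [hJ_zero _ (by linarith [not_lt.1 h])]
        simp
    exact add_le_add h1 h2
  · -- rho bound
    intro τ
    have hint1 : ∀ c : ℝ, Integrable (fun t => (τ - t) * g (t - c)) := by
      intro c
      exact ((continuous_const.sub continuous_id).mul (hshift_cont c)).integrable_of_hasCompactSupport
        (hshift_cs c).mul_left
    have hIc : ∀ c : ℝ, (∫ t in Iic τ, (τ - t) * g (t - c)) ≤ max (τ - c) 0 * C0 b := by
      intro c
      have step1 : (∫ t in Iic τ, (τ - t) * g (t - c)) ≤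
          ∫ t in Iic τ, max (τ - c) 0 * g (t - c) := by
        apply setIntegral_mono_on ((hint1 c).integrableOn)
          (((hshift_int c).const_mul _).integrableOn) measurableSet_Iic
        intro t ht
        by_cases hgt : g (t - c) = 0
        · simp [hgt]
        · have hb0 : betaFn b (t - c) ≠ 0 := by
            intro h
            exact hgt (by simp [hg_def, h])
          have hpos : ¬ (t - c ≤ 0) := fun h =>
            hb0 (beta_eq_zero hb_supp hb_nonneg (Or.inl h))
          have h2 : τ - t ≤ max (τ - c) 0 :=
            le_trans (by push_neg at hpos; linarith) (le_max_left _ _)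
          exact mul_le_mul_of_nonneg_right h2 (hgnn _)
      rw [integral_const_mul] at step1
      refine le_trans step1 ?_
      apply mul_le_mul_of_nonneg_left _ (le_max_right _ _)
      rw [integral_Iic_comp_sub_right]
      exact hJ_le _
    have hrho_split : rhoRS b r s τ =
        r * (∫ t in Iic τ, (τ - t) * g (t - Real.log r))
        + s * (∫ t in Iic τ, (τ - t) * g (t - Real.log s)) := by
      unfold rhoRS
      have h1 : ∀ t ∈ Iic τ,
          (τ - t) * Real.exp t * (betaFn b (t - Real.log r) + betaFn b (t - Real.log s)) =
          r * ((τ - t) * g (t - Real.log r)) + s * ((τ - t) * g (t - Real.log s)) := by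
        intro t _
        have := hf_eq t
        simp only [hf_def, hg_def] at this ⊢
        linear_combination (τ - t) * this
      rw [setIntegral_congr_fun measurableSet_Iic h1,
        integral_add (((hint1 _).const_mul r).integrableOn)
          (((hint1 _).const_mul s).integrableOn),
        integral_const_mul, integral_const_mul]
    rw [hrho_split, mul_add]
    have h1 : r * (∫ t in Iic τ, (τ - t) * g (t - Real.log r)) ≤
        C0 b * (r * max (τ - Real.log r) 0) := by
      calc r * (∫ t in Iic τ, (τ - t) * g (t - Real.log r))
          ≤ r * (max (τ - Real.log r) 0 * C0 b) :=
            mul_le_mul_of_nonneg_left (hIc _) hr.le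
        _ = C0 b * (r * max (τ - Real.log r) 0) := by ring
    have h2 : s * (∫ t in Iic τ, (τ - t) * g (t - Real.log s)) ≤
        C0 b * (s * max (τ - Real.log s) 0) := by
      calc s * (∫ t in Iic τ, (τ - t) * g (t - Real.log s))
          ≤ s * (max (τ - Real.log s) 0 * C0 b) :=
            mul_le_mul_of_nonneg_left (hIc _) hs.le
        _ = C0 b * (s * max (τ - Real.log s) 0) := by ring
    exact add_le_add h1 h2
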